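/- For any probability measure μ on ℝ^d, any finite nonempty set P ⊆ ℝ^d, any point p ∈ P, and any point x ∈ ℝ^d, Kpow_P(μ,x)² ≤ 2·D_K(μ,δ_x)² + 3·D_K(p,x)². -/

import Mathlib

/-! Up to the constant `gaussFeatureScale d σ`, the Gaussian kernel `K(p, q)` is the `L²(ℝ^d)`
inner product of the Gaussians `exp (-‖· - p‖² / σ²)` and `exp (-‖· - q‖² / σ²)` (their product is
again a Gaussian, centred at the midpoint). Hence `D_K(μ, ν)` is a multiple of the `L²` distance
between the embeddings `t ↦ ∫ exp (-‖t - p‖² / σ²) dμ(p)`, and the pointwise inequality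
`(a + b)² ≤ 2 (a² + b²)` gives `D_K(μ, ν)² ≤ 2 D_K(μ, ρ)² + 2 D_K(ρ, ν)²`. Bounding the minimum in
`Kpow` by its term at `p` and taking `ρ = δ_x`, `ν = δ_p` yields
`Kpow² ≤ D_K(p, x)² + 2 D_K(μ, δ_x)² + 2 D_K(p, x)²`. -/

open MeasureTheory

noncomputable def gaussK {d : ℕ} (σ : ℝ) (p x : EuclideanSpace ℝ (Fin d)) : ℝ :=
  σ ^ 2 * Real.exp (-‖p - x‖ ^ 2 / (2 * σ ^ 2))

noncomputable def kde {d : ℕ} (σ : ℝ) (μ : Measure (EuclideanSpace ℝ (Fin d)))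
    (x : EuclideanSpace ℝ (Fin d)) : ℝ :=
  ∫ p, gaussK σ p x ∂μ

noncomputable def kap {d : ℕ} (σ : ℝ) (μ ν : Measure (EuclideanSpace ℝ (Fin d))) : ℝ :=
  ∫ p, ∫ q, gaussK σ p q ∂ν ∂μ

noncomputable def DK {d : ℕ} (σ : ℝ) (μ ν : Measure (EuclideanSpace ℝ (Fin d))) : ℝ :=
  Real.sqrt (kap σ μ μ + kap σ ν ν - 2 * kap σ μ ν)

/-- kernel distance from a measure to a point -/
noncomputable def dKmu {d : ℕ} (σ : ℝ) (μ : Measure (EuclideanSpace ℝ (Fin d)))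
    (x : EuclideanSpace ℝ (Fin d)) : ℝ :=
  DK σ μ (Measure.dirac x)

/-- kernel distance between two points -/
noncomputable def DKpt {d : ℕ} (σ : ℝ) (p q : EuclideanSpace ℝ (Fin d)) : ℝ :=
  DK σ (Measure.dirac p) (Measure.dirac q)

/-- kernel power distance with respect to a finite nonempty point set `P` -/
noncomputable def Kpow {d : ℕ} (σ : ℝ) (P : Finset (EuclideanSpace ℝ (Fin d)))
    (hP : P.Nonempty) (μ : Measure (EuclideanSpace ℝ (Fin d)))
    (x : EuclideanSpace ℝ (Fin d)) : ℝ :=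
  Real.sqrt (P.inf' hP fun p => DKpt σ p x ^ 2 + dKmu σ μ p ^ 2)

open Real

section GaussianFeature

variable {V : Type*} [NormedAddCommGroup V]

noncomputable def gaussFeature (σ : ℝ) (p t : V) : ℝ :=
  rexp (-(σ ^ 2)⁻¹ * ‖t - p‖ ^ 2)

theorem gaussFeature_nonneg (σ : ℝ) (p t : V) : 0 ≤ gaussFeature σ p t :=
  (exp_pos _).le

theorem norm_gaussFeature_le_one (σ : ℝ) (p t : V) : ‖gaussFeature σ p t‖ ≤ 1 := by
  rw [Real.norm_of_nonneg (gaussFeature_nonneg σ p t)]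
  exact exp_le_one_iff.2 (mul_nonpos_of_nonpos_of_nonneg (by simp [sq_nonneg]) (sq_nonneg _))

theorem continuous_gaussFeature (σ : ℝ) :
    Continuous (fun z : V × V => gaussFeature σ z.1 z.2) := by
  unfold gaussFeature
  fun_prop

section

variable [MeasurableSpace V] {σ : ℝ} {μ : Measure V}

noncomputable def gaussEmbedding (σ : ℝ) (μ : Measure V) (t : V) : ℝ :=
  ∫ p, gaussFeature σ p t ∂μ

theorem norm_gaussEmbedding_le [IsFiniteMeasure μ] (t : V) :
    ‖gaussEmbedding σ μ t‖ ≤ μ.real Set.univ := by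
  simpa [gaussEmbedding] using norm_integral_le_of_norm_le_const (μ := μ) (C := 1)
    (Filter.Eventually.of_forall fun p => norm_gaussFeature_le_one σ p t)

end

variable [InnerProductSpace ℝ V]

/-- Completing the square: by Apollonius, `‖t - p‖² + ‖t - q‖² = 2‖t - m‖² + ‖p - q‖² / 2`
for the midpoint `m` of `p` and `q`. -/
theorem gaussFeature_mul_gaussFeature (σ : ℝ) (p q t : V) :
    gaussFeature σ p t * gaussFeature σ q t =
      rexp (-‖p - q‖ ^ 2 / (2 * σ ^ 2)) * rexp (-(2 / σ ^ 2) * ‖t - midpoint ℝ p q‖ ^ 2) := by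
  have h := EuclideanGeometry.dist_sq_add_dist_sq_eq_two_mul_dist_midpoint_sq_add_half_dist_sq
    t p q
  simp only [dist_eq_norm] at h
  simp only [gaussFeature, ← exp_add]
  congr 1
  linear_combination (-(σ ^ 2)⁻¹) * h

variable [FiniteDimensional ℝ V] [MeasurableSpace V] [BorelSpace V] {σ : ℝ} {μ : Measure V}

theorem integrable_exp_neg_mul_sq_norm {b : ℝ} (hb : 0 < b) :
    Integrable (fun v : V => rexp (-b * ‖v‖ ^ 2)) := by
  have h := (GaussianFourier.integrable_cexp_neg_mul_sq_norm_add (V := V)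
    (b := (b : ℂ)) (by simpa) 0 0).norm
  simp only [Complex.norm_exp] at h
  refine h.congr (Filter.Eventually.of_forall fun v => ?_)
  simp [← Complex.ofReal_pow]

theorem integrable_gaussFeature (hσ : σ ≠ 0) (p : V) : Integrable (gaussFeature σ p) :=
  (integrable_exp_neg_mul_sq_norm (V := V) (by positivity : 0 < (σ ^ 2)⁻¹)).comp_sub_right p

theorem integral_gaussFeature (hσ : σ ≠ 0) (p : V) :
    ∫ t, gaussFeature σ p t = (π * σ ^ 2) ^ (Module.finrank ℝ V / 2 : ℝ) := by
  unfold gaussFeature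
  rw [integral_sub_right_eq_self (fun t : V => rexp (-(σ ^ 2)⁻¹ * ‖t‖ ^ 2)) p,
    GaussianFourier.integral_rexp_neg_mul_sq_norm (by positivity), div_inv_eq_mul]

theorem integral_gaussFeature_mul (hσ : σ ≠ 0) (p q : V) :
    ∫ t, gaussFeature σ p t * gaussFeature σ q t =
      (π * σ ^ 2 / 2) ^ (Module.finrank ℝ V / 2 : ℝ) * rexp (-‖p - q‖ ^ 2 / (2 * σ ^ 2)) := by
  simp only [gaussFeature_mul_gaussFeature, integral_const_mul]
  rw [integral_sub_right_eq_self (fun t : V => rexp (-(2 / σ ^ 2) * ‖t‖ ^ 2)),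
    GaussianFourier.integral_rexp_neg_mul_sq_norm (by positivity), div_div_eq_mul_div, mul_comm]

theorem stronglyMeasurable_gaussEmbedding [SFinite μ] :
    StronglyMeasurable (gaussEmbedding σ μ) :=
  ((continuous_gaussFeature σ).comp continuous_swap).stronglyMeasurable.integral_prod_right'

theorem integrable_mul_gaussFeature_prod [IsFiniteMeasure μ] (hσ : σ ≠ 0) {g : V → ℝ} {M : ℝ}
    (hg : AEStronglyMeasurable g) (hgM : ∀ t, ‖g t‖ ≤ M) :
    Integrable (fun z : V × V => g z.2 * gaussFeature σ z.1 z.2) (μ.prod volume) := by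
  have hF : AEStronglyMeasurable (fun z : V × V => g z.2 * gaussFeature σ z.1 z.2)
      (μ.prod volume) :=
    hg.comp_snd.mul (continuous_gaussFeature σ).aestronglyMeasurable
  have hslice (p : V) : Integrable (fun t => g t * gaussFeature σ p t) :=
    (integrable_gaussFeature hσ p).bdd_mul hg (Filter.Eventually.of_forall hgM)
  refine (integrable_prod_iff hF).2 ⟨Filter.Eventually.of_forall hslice, ?_⟩
  refine (integrable_const (M * (π * σ ^ 2) ^ (Module.finrank ℝ V / 2 : ℝ))).mono'
    hF.norm.integral_prod_right' (Filter.Eventually.of_forall fun p => ?_)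
  rw [Real.norm_of_nonneg (integral_nonneg fun t => norm_nonneg _),
    ← integral_gaussFeature hσ p, ← integral_const_mul]
  refine integral_mono (hslice p).norm ((integrable_gaussFeature hσ p).const_mul M) fun t => ?_
  rw [norm_mul, Real.norm_of_nonneg (gaussFeature_nonneg σ p t)]
  exact mul_le_mul_of_nonneg_right (hgM t) (gaussFeature_nonneg σ p t)

theorem integrable_gaussEmbedding [IsFiniteMeasure μ] (hσ : σ ≠ 0) :
    Integrable (gaussEmbedding σ μ) := by
  have h := (integrable_mul_gaussFeature_prod (μ := μ) hσ (g := fun _ => (1 : ℝ))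
    aestronglyMeasurable_const (fun _ => norm_one.le)).integral_prod_right
  simp only [one_mul] at h
  exact h

theorem integral_integral_mul_gaussFeature [IsFiniteMeasure μ] (hσ : σ ≠ 0) {g : V → ℝ} {M : ℝ}
    (hg : AEStronglyMeasurable g) (hgM : ∀ t, ‖g t‖ ≤ M) :
    ∫ p, (∫ t, g t * gaussFeature σ p t) ∂μ = ∫ t, g t * gaussEmbedding σ μ t := by
  rw [integral_integral_swap (integrable_mul_gaussFeature_prod hσ hg hgM)]
  simp only [integral_const_mul, gaussEmbedding]

theorem integrable_gaussEmbedding_mul (hσ : σ ≠ 0) (μ ν : Measure V) [IsFiniteMeasure μ]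
    [IsFiniteMeasure ν] : Integrable (fun t => gaussEmbedding σ μ t * gaussEmbedding σ ν t) :=
  (integrable_gaussEmbedding hσ).bdd_mul stronglyMeasurable_gaussEmbedding.aestronglyMeasurable
    (Filter.Eventually.of_forall norm_gaussEmbedding_le)

theorem integrable_sq_gaussEmbedding_sub (hσ : σ ≠ 0) (μ ν : Measure V) [IsFiniteMeasure μ]
    [IsFiniteMeasure ν] :
    Integrable (fun t => (gaussEmbedding σ μ t - gaussEmbedding σ ν t) ^ 2) := by
  refine (((integrable_gaussEmbedding_mul hσ μ μ).add (integrable_gaussEmbedding_mul hσ ν ν)).sub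
    ((integrable_gaussEmbedding_mul hσ μ ν).const_mul 2)).congr
    (Filter.Eventually.of_forall fun t => ?_)
  simp only [Pi.add_apply, Pi.sub_apply]
  ring

end GaussianFeature

section KernelDistance

variable {d : ℕ} {σ : ℝ}

noncomputable def gaussFeatureScale (d : ℕ) (σ : ℝ) : ℝ :=
  σ ^ 2 / (π * σ ^ 2 / 2) ^ ((d : ℝ) / 2)

theorem gaussFeatureScale_nonneg (d : ℕ) (σ : ℝ) : 0 ≤ gaussFeatureScale d σ := by
  unfold gaussFeatureScale
  have := pi_pos
  positivity

theorem gaussK_eq_mul_integral (hσ : σ ≠ 0) (p q : EuclideanSpace ℝ (Fin d)) :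
    gaussK σ p q = gaussFeatureScale d σ * ∫ t, gaussFeature σ p t * gaussFeature σ q t := by
  have := pi_pos
  rw [integral_gaussFeature_mul hσ, finrank_euclideanSpace_fin, gaussK, gaussFeatureScale]
  field_simp

theorem kap_eq_integral (hσ : σ ≠ 0) (μ ν : Measure (EuclideanSpace ℝ (Fin d)))
    [IsFiniteMeasure μ] [IsFiniteMeasure ν] :
    kap σ μ ν = gaussFeatureScale d σ * ∫ t, gaussEmbedding σ μ t * gaussEmbedding σ ν t := by
  have hinner (p : EuclideanSpace ℝ (Fin d)) : ∫ q, gaussK σ p q ∂ν =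
      gaussFeatureScale d σ * ∫ t, gaussEmbedding σ ν t * gaussFeature σ p t := by
    simp only [gaussK_eq_mul_integral hσ p, integral_const_mul]
    rw [integral_integral_mul_gaussFeature hσ (integrable_gaussFeature hσ p).aestronglyMeasurable
      (norm_gaussFeature_le_one σ p)]
    simp only [mul_comm]
  simp only [kap, hinner, integral_const_mul]
  rw [integral_integral_mul_gaussFeature hσ stronglyMeasurable_gaussEmbedding.aestronglyMeasurable
    norm_gaussEmbedding_le]
  simp only [mul_comm]

theorem integral_sq_gaussEmbedding_sub (hσ : σ ≠ 0) (μ ν : Measure (EuclideanSpace ℝ (Fin d)))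
    [IsFiniteMeasure μ] [IsFiniteMeasure ν] :
    ∫ t, (gaussEmbedding σ μ t - gaussEmbedding σ ν t) ^ 2 =
      (∫ t, gaussEmbedding σ μ t * gaussEmbedding σ μ t) +
        (∫ t, gaussEmbedding σ ν t * gaussEmbedding σ ν t) -
          2 * ∫ t, gaussEmbedding σ μ t * gaussEmbedding σ ν t := by
  have hμμ := integrable_gaussEmbedding_mul hσ μ μ
  have hνν := integrable_gaussEmbedding_mul hσ ν ν
  have hμν := integrable_gaussEmbedding_mul hσ μ ν
  rw [← integral_add hμμ hνν, ← integral_const_mul,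
    ← integral_sub (f := fun t => _ + _) (hμμ.add hνν) (hμν.const_mul 2)]
  congr 1 with t
  ring

theorem DK_eq_sqrt_integral (hσ : σ ≠ 0) (μ ν : Measure (EuclideanSpace ℝ (Fin d)))
    [IsFiniteMeasure μ] [IsFiniteMeasure ν] :
    DK σ μ ν =
      √(gaussFeatureScale d σ * ∫ t, (gaussEmbedding σ μ t - gaussEmbedding σ ν t) ^ 2) := by
  rw [DK, kap_eq_integral hσ, kap_eq_integral hσ, kap_eq_integral hσ,
    integral_sq_gaussEmbedding_sub hσ]
  ring_nf

theorem sq_DK_eq_integral (hσ : σ ≠ 0) (μ ν : Measure (EuclideanSpace ℝ (Fin d)))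
    [IsFiniteMeasure μ] [IsFiniteMeasure ν] :
    DK σ μ ν ^ 2 =
      gaussFeatureScale d σ * ∫ t, (gaussEmbedding σ μ t - gaussEmbedding σ ν t) ^ 2 := by
  rw [DK_eq_sqrt_integral hσ, sq_sqrt (mul_nonneg (gaussFeatureScale_nonneg d σ)
    (integral_nonneg fun t => sq_nonneg _))]

theorem DK_comm (hσ : σ ≠ 0) (μ ν : Measure (EuclideanSpace ℝ (Fin d)))
    [IsFiniteMeasure μ] [IsFiniteMeasure ν] : DK σ μ ν = DK σ ν μ := by
  simp only [DK_eq_sqrt_integral hσ, sub_sq_comm]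

theorem sq_DK_le_two_mul_add_two_mul (hσ : σ ≠ 0) (μ ν ρ : Measure (EuclideanSpace ℝ (Fin d)))
    [IsFiniteMeasure μ] [IsFiniteMeasure ν] [IsFiniteMeasure ρ] :
    DK σ μ ν ^ 2 ≤ 2 * DK σ μ ρ ^ 2 + 2 * DK σ ρ ν ^ 2 := by
  have hμρ := integrable_sq_gaussEmbedding_sub hσ μ ρ
  have hρν := integrable_sq_gaussEmbedding_sub hσ ρ ν
  simp only [sq_DK_eq_integral hσ]
  calc gaussFeatureScale d σ * ∫ t, (gaussEmbedding σ μ t - gaussEmbedding σ ν t) ^ 2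
      ≤ gaussFeatureScale d σ * ∫ t, 2 * ((gaussEmbedding σ μ t - gaussEmbedding σ ρ t) ^ 2 +
          (gaussEmbedding σ ρ t - gaussEmbedding σ ν t) ^ 2) := by
        refine mul_le_mul_of_nonneg_left (integral_mono (integrable_sq_gaussEmbedding_sub hσ μ ν)
          ((hμρ.add hρν).const_mul 2) fun t => ?_) (gaussFeatureScale_nonneg d σ)
        simpa only [sub_add_sub_cancel] using
          add_sq_le (a := gaussEmbedding σ μ t - gaussEmbedding σ ρ t)
            (b := gaussEmbedding σ ρ t - gaussEmbedding σ ν t)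
    _ = _ := by
        rw [integral_const_mul, integral_add hμρ hρν]
        ring

theorem sq_Kpow_le_of_mem {P : Finset (EuclideanSpace ℝ (Fin d))} (hP : P.Nonempty)
    (μ : Measure (EuclideanSpace ℝ (Fin d))) {p : EuclideanSpace ℝ (Fin d)} (hp : p ∈ P)
    (x : EuclideanSpace ℝ (Fin d)) :
    Kpow σ P hP μ x ^ 2 ≤ DKpt σ p x ^ 2 + dKmu σ μ p ^ 2 := by
  rw [Kpow, sq_sqrt (Finset.le_inf' hP _ fun q _ => by positivity)]
  exact Finset.inf'_le _ hp

end KernelDistance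

theorem kernel_power_distance_upper_general {d : ℕ} (σ : ℝ) (hσ : 0 < σ)
    (μ : Measure (EuclideanSpace ℝ (Fin d))) [IsProbabilityMeasure μ]
    (P : Finset (EuclideanSpace ℝ (Fin d))) (hP : P.Nonempty)
    (p : EuclideanSpace ℝ (Fin d)) (hp : p ∈ P)
    (x : EuclideanSpace ℝ (Fin d)) :
    Kpow σ P hP μ x ^ 2 ≤ 2 * DK σ μ (Measure.dirac x) ^ 2 + 3 * DKpt σ p x ^ 2 := by
  calc Kpow σ P hP μ x ^ 2 ≤ DKpt σ p x ^ 2 + dKmu σ μ p ^ 2 := sq_Kpow_le_of_mem hP μ hp x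
    _ ≤ DKpt σ p x ^ 2 +
          (2 * DK σ μ (Measure.dirac x) ^ 2 + 2 * DK σ (Measure.dirac x) (Measure.dirac p) ^ 2) :=
        add_le_add_right (sq_DK_le_two_mul_add_two_mul hσ.ne' μ _ _) _
    _ = 2 * DK σ μ (Measure.dirac x) ^ 2 + 3 * DKpt σ p x ^ 2 := by
        rw [DKpt, DK_comm hσ.ne' (Measure.dirac x)]
        ring

/-- `Kpow_P(μ,x)² ≤ 2·D_K(μ,δ_x)² + 3·D_K(p,x)²` for any `p ∈ P`. -/
theorem kernel_power_distance_upper {d : ℕ} (hd : 1 ≤ d) (σ : ℝ) (hσ : 0 < σ)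
    (μ : Measure (EuclideanSpace ℝ (Fin d))) [IsProbabilityMeasure μ]
    (P : Finset (EuclideanSpace ℝ (Fin d))) (hP : P.Nonempty)
    (p : EuclideanSpace ℝ (Fin d)) (hp : p ∈ P)
    (x : EuclideanSpace ℝ (Fin d)) :
    Kpow σ P hP μ x ^ 2 ≤ 2 * DK σ μ (Measure.dirac x) ^ 2 + 3 * DKpt σ p x ^ 2 :=
  kernel_power_distance_upper_general σ hσ μ P hP p hp x
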